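/- Every strict unilateral improvement step strictly increases the potential: if player m deviates from s_m to s'_m ∈ S_m and Ũ_m(s'_m, s_{−m}) > Ũ_m(s), then Ψ(s'_m, s_{−m}) > Ψ(s). -/

import Mathlib

open Finset

variable {ι V : Type*} [Fintype ι] [Nonempty ι] [DecidableEq ι] [Fintype V] [DecidableEq V]
variable {S : ι → Type*} [∀ m, Fintype (S m)] [∀ m, Nonempty (S m)]

/-- The congestion `z_v(s)`: the number of players whose strategy uses vertex `v`. -/
def congestion (Vert : ∀ m : ι, S m → Finset V) (s : ∀ n, S n) (v : V) : ℕ :=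
  (Finset.univ.filter fun n => v ∈ Vert n (s n)).card

/-- The reward part `Ũ^V_m(s)` of player `m`'s payoff. -/
def payoffV (Vert : ∀ m : ι, S m → Finset V) (ϱ : V → ℕ → ℝ) (m : ι) (s : ∀ n, S n) : ℝ :=
  ∑ v ∈ Vert m (s m), ϱ v (congestion Vert s v)

/-- Player `m`'s payoff `Ũ_m(s) = Σ_{v ∈ Vert(s_m)} ϱ_v(z_v(s)) − c_m(s_m)`. -/
def payoff (Vert : ∀ m : ι, S m → Finset V) (ϱ : V → ℕ → ℝ) (c : ∀ m : ι, S m → ℝ)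
    (m : ι) (s : ∀ n, S n) : ℝ :=
  payoffV Vert ϱ m s - c m (s m)

/-- The vertex part `Ψ^V(s) = Σ_{v ∈ V} Σ_{q=1}^{z_v(s)} ϱ_v(q)` of the potential. -/
def potentialV (Vert : ∀ m : ι, S m → Finset V) (ϱ : V → ℕ → ℝ) (s : ∀ n, S n) : ℝ :=
  ∑ v : V, ∑ q ∈ Finset.Icc 1 (congestion Vert s v), ϱ v q

/-- The potential `Ψ(s) = Σ_{v ∈ V} Σ_{q=1}^{z_v(s)} ϱ_v(q) − Σ_{n∈ι} c_n(s_n)`. -/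
def potential (Vert : ∀ m : ι, S m → Finset V) (ϱ : V → ℕ → ℝ) (c : ∀ m : ι, S m → ℝ)
    (s : ∀ n, S n) : ℝ :=
  potentialV Vert ϱ s - ∑ n : ι, c n (s n)

/-!
Split off player `m`. If `k` other players use a vertex `v`, then `m` joining `v` adds exactly
`ϱ_v(k + 1)` to `Σ_{q=1}^{z_v} ϱ_v(q)`, which is the reward `m` collects at `v`. Hence
`Ψ(s) = Ψ₋ₘ(s₋ₘ) + Ũ_m(s)`, where `Ψ₋ₘ` is the potential of the game played by the other players,
so a unilateral deviation of `m` changes `Ψ` by exactly the change of `Ũ_m`.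
-/

theorem Finset.sum_Icc_one_add_ite {M : Type*} [AddCommMonoid M] (f : ℕ → M) (k : ℕ)
    (p : Prop) [Decidable p] :
    ∑ q ∈ Icc 1 (k + if p then 1 else 0), f q = ∑ q ∈ Icc 1 k, f q + if p then f (k + 1) else 0 := by
  split_ifs
  · exact sum_Icc_succ_top (Nat.le_add_left 1 k) f
  · simp only [add_zero]

section

omit [Nonempty ι] [∀ m, Fintype (S m)] [∀ m, Nonempty (S m)]

def othersCongestion (Vert : ∀ m : ι, S m → Finset V) (m : ι) (s : ∀ n, S n) (v : V) : ℕ :=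
  ((univ.erase m).filter fun n => v ∈ Vert n (s n)).card

def potentialOthers (Vert : ∀ m : ι, S m → Finset V) (ϱ : V → ℕ → ℝ) (c : ∀ m : ι, S m → ℝ)
    (m : ι) (s : ∀ n, S n) : ℝ :=
  ∑ v : V, ∑ q ∈ Icc 1 (othersCongestion Vert m s v), ϱ v q - ∑ n ∈ univ.erase m, c n (s n)

omit [Fintype V] in
theorem congestion_eq_othersCongestion_add (Vert : ∀ m : ι, S m → Finset V) (m : ι)
    (s : ∀ n, S n) (v : V) :
    congestion Vert s v = othersCongestion Vert m s v + if v ∈ Vert m (s m) then 1 else 0 := by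
  rw [congestion, othersCongestion, card_filter, card_filter, ← add_sum_erase _ _ (mem_univ m),
    add_comm]

omit [Fintype V] in
theorem othersCongestion_update (Vert : ∀ m : ι, S m → Finset V) (m : ι) (s : ∀ n, S n)
    (s' : S m) (v : V) :
    othersCongestion Vert m (Function.update s m s') v = othersCongestion Vert m s v := by
  refine congrArg card (filter_congr fun n hn => ?_)
  rw [Function.update_of_ne (ne_of_mem_erase hn)]

theorem potentialOthers_update (Vert : ∀ m : ι, S m → Finset V) (ϱ : V → ℕ → ℝ)
    (c : ∀ m : ι, S m → ℝ) (m : ι) (s : ∀ n, S n) (s' : S m) :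
    potentialOthers Vert ϱ c m (Function.update s m s') = potentialOthers Vert ϱ c m s := by
  simp only [potentialOthers, othersCongestion_update]
  congr 1
  exact sum_congr rfl fun n hn => by rw [Function.update_of_ne (ne_of_mem_erase hn)]

theorem payoffV_eq_sum_ite (Vert : ∀ m : ι, S m → Finset V) (ϱ : V → ℕ → ℝ) (m : ι)
    (s : ∀ n, S n) :
    payoffV Vert ϱ m s =
      ∑ v : V, if v ∈ Vert m (s m) then ϱ v (othersCongestion Vert m s v + 1) else 0 := by
  rw [sum_ite_mem, univ_inter, payoffV]
  refine sum_congr rfl fun v hv => ?_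
  rw [congestion_eq_othersCongestion_add Vert m, if_pos hv]

theorem potentialV_eq_add_payoffV (Vert : ∀ m : ι, S m → Finset V) (ϱ : V → ℕ → ℝ) (m : ι)
    (s : ∀ n, S n) :
    potentialV Vert ϱ s =
      ∑ v : V, ∑ q ∈ Icc 1 (othersCongestion Vert m s v), ϱ v q + payoffV Vert ϱ m s := by
  simp only [potentialV, payoffV_eq_sum_ite, congestion_eq_othersCongestion_add Vert m,
    sum_Icc_one_add_ite, sum_add_distrib]

theorem potential_eq_potentialOthers_add_payoff (Vert : ∀ m : ι, S m → Finset V)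
    (ϱ : V → ℕ → ℝ) (c : ∀ m : ι, S m → ℝ) (m : ι) (s : ∀ n, S n) :
    potential Vert ϱ c s = potentialOthers Vert ϱ c m s + payoff Vert ϱ c m s := by
  rw [potential, potentialOthers, payoff, potentialV_eq_add_payoffV Vert ϱ m,
    ← add_sum_erase _ _ (mem_univ m)]
  ring

theorem potential_update_sub (Vert : ∀ m : ι, S m → Finset V) (ϱ : V → ℕ → ℝ)
    (c : ∀ m : ι, S m → ℝ) (s : ∀ n, S n) (m : ι) (s' : S m) :
    potential Vert ϱ c (Function.update s m s') - potential Vert ϱ c s =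
      payoff Vert ϱ c m (Function.update s m s') - payoff Vert ϱ c m s := by
  rw [potential_eq_potentialOthers_add_payoff Vert ϱ c m, potential_eq_potentialOthers_add_payoff
    Vert ϱ c m s, potentialOthers_update, add_sub_add_left_eq_sub]

end

/-- Every strict unilateral improvement step strictly increases the potential. -/
theorem improvement_increases_potential (Vert : ∀ m : ι, S m → Finset V)
    (ϱ : V → ℕ → ℝ) (c : ∀ m : ι, S m → ℝ) (s : ∀ n, S n) (m : ι) (s' : S m)
    (h : payoff Vert ϱ c m s < payoff Vert ϱ c m (Function.update s m s')) :
    potential Vert ϱ c s < potential Vert ϱ c (Function.update s m s') := by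
  rw [← sub_pos, potential_update_sub]
  exact sub_pos.mpr h
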